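/- arXiv:1905.01883 — 2 statements merged into one kernel-verified Lean document; each statement's English description precedes it below -/
import Mathlib

section
/- Let d ≥ 2. If H_1, ..., H_s are nontrivial closed subgroups of ℤ_ℓ^d, then there is a continuous surjection φ : ℤ_ℓ^d → ℤ_ℓ such that φ(H_i) ≠ 0 for all i. -/
/-- Given finitely many nontrivial closed subgroups `H₁, ..., H_s` of
`ℤ_ℓ^d` (`d ≥ 2`), there is a continuous surjective homomorphism `φ : ℤ_ℓ^d → ℤ_ℓ`
with `φ(Hᵢ) ≠ 0` for all `i`. -/
theorem stmt10 (ℓ : ℕ) [Fact ℓ.Prime] (d : ℕ) (hd : 2 ≤ d)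
    (s : ℕ) (H : Fin s → AddSubgroup (Fin d → ℤ_[ℓ]))
    (hclosed : ∀ i, IsClosed (H i : Set (Fin d → ℤ_[ℓ])))
    (hne : ∀ i, H i ≠ ⊥) :
    ∃ φ : (Fin d → ℤ_[ℓ]) →+ ℤ_[ℓ], Continuous φ ∧ Function.Surjective φ ∧
      ∀ i, AddSubgroup.map φ (H i) ≠ ⊥ := by
  have hNZ : NeZero d := ⟨by omega⟩
  -- choose a nonzero element in each H i
  have hx : ∀ i, ∃ x, x ∈ H i ∧ x ≠ 0 := by
    intro i
    by_contra h
    push_neg at h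
    apply hne i
    ext v
    simp only [AddSubgroup.mem_bot]
    constructor
    · intro hv
      by_contra hv0
      exact hv0 (h v hv)
    · rintro rfl; exact (H i).zero_mem
  choose x hxH hx0 using hx
  -- the associated nonzero polynomials
  set p : Fin s → Polynomial ℤ_[ℓ] :=
    fun i => ∑ j : Fin d, Polynomial.C (x i j) * Polynomial.X ^ (j : ℕ) with hp_def
  have hp : ∀ i, p i ≠ 0 := by
    intro i hpi
    apply hx0 i
    funext j
    have hc := congrArg (fun q => Polynomial.coeff q (j : ℕ)) hpi
    simp only [hp_def, Polynomial.finset_sum_coeff, Polynomial.coeff_C_mul,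
      Polynomial.coeff_X_pow, mul_ite, mul_one, mul_zero, Polynomial.coeff_zero] at hc
    rw [Finset.sum_eq_single j] at hc
    · simpa using hc
    · intro b _ hb
      rw [if_neg fun h => hb (Fin.val_injective h.symm)]
    · simp
  -- avoid the finitely many roots
  have hfin : (⋃ i, {t : ℤ_[ℓ] | Polynomial.IsRoot (p i) t}).Finite :=
    Set.finite_iUnion fun i => Polynomial.finite_setOf_isRoot (hp i)
  obtain ⟨t, ht⟩ := hfin.infinite_compl.nonempty
  simp only [Set.mem_compl_iff, Set.mem_iUnion, not_exists, Set.mem_setOf_eq] at ht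
  -- the homomorphism
  refine ⟨{ toFun := fun v => ∑ j : Fin d, t ^ (j : ℕ) * v j
            map_zero' := by simp
            map_add' := by
              intro a b
              simp [mul_add, Finset.sum_add_distrib] }, ?_, ?_, ?_⟩
  · show Continuous fun v : Fin d → ℤ_[ℓ] => ∑ j : Fin d, t ^ (j : ℕ) * v j
    exact continuous_finset_sum _ fun j _ => continuous_const.mul (continuous_apply j)
  · intro y
    refine ⟨fun j => if j = (0 : Fin d) then y else 0, ?_⟩
    simp [mul_ite, Finset.sum_ite_eq']
  · intro i hbot
    have hmem := AddSubgroup.mem_map_of_mem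
      ({ toFun := fun v : Fin d → ℤ_[ℓ] => ∑ j : Fin d, t ^ (j : ℕ) * v j
         map_zero' := by simp
         map_add' := by
           intro a b
           simp [mul_add, Finset.sum_add_distrib] } : (Fin d → ℤ_[ℓ]) →+ ℤ_[ℓ]) (hxH i)
    rw [hbot, AddSubgroup.mem_bot] at hmem
    apply ht i
    have heval : Polynomial.eval t (p i) = ∑ j : Fin d, t ^ (j : ℕ) * x i j := by
      rw [hp_def]
      simp only [Polynomial.eval_finset_sum, Polynomial.eval_mul, Polynomial.eval_C,
        Polynomial.eval_pow, Polynomial.eval_X]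
      exact Finset.sum_congr rfl fun j _ => mul_comm _ _
    have hmem' : (∑ j : Fin d, t ^ (j : ℕ) * x i j) = 0 := hmem
    rw [Polynomial.IsRoot, heval]
    exact hmem'
end

section
/- Let Λ_d = ℤ_ℓ[[T_1,...,T_d]], let 𝔄 ⊂ Λ_d be the kernel of a surjection Λ_d → Λ = ℤ_ℓ[[T]], and let M be a finitely generated Λ_d-module. If M/𝔄M is a torsion Λ-module, then M is a torsion Λ_d-module. -/
/-!
Being finitely generated and torsion, `M/𝔄M` is killed by one nonzero divisor of `Λ`; lift it
to `a ∈ Λ_d`, so that `a M ⊆ 𝔄M`. The Cayley–Hamilton theorem for finitely generated modules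
gives a monic `p` whose lower coefficients lie in `𝔄` with `p(a) M = 0`; modulo `𝔄`, `p(a)`
becomes `π(a)ⁿ ≠ 0`, so `p(a)` is a nonzero annihilator of `M` in the domain `Λ_d`.
-/

open Polynomial

theorem Polynomial.Monic.map_eq_X_pow_of_coeff_mem_ker {R S : Type*} [Semiring R] [Semiring S]
    {f : R →+* S} {p : R[X]} (hp : p.Monic)
    (hcoeff : ∀ k < p.natDegree, p.coeff k ∈ RingHom.ker f) :
    p.map f = X ^ p.natDegree := by
  ext k
  obtain hk | rfl | hk := lt_trichotomy k p.natDegree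
  · simpa [hk.ne] using hcoeff k hk
  · simp [hp]
  · simp [coeff_eq_zero_of_natDegree_lt hk, hk.ne']

theorem Module.exists_mem_annihilator_map_eq_pow_of_smul_mem_ker_smul_top {R S M : Type*}
    [CommRing R] [Semiring S] [AddCommGroup M] [Module R M] [Module.Finite R M] (f : R →+* S)
    {a : R} (ha : ∀ m : M, a • m ∈ RingHom.ker f • (⊤ : Submodule R M)) :
    ∃ r ∈ Module.annihilator R M, ∃ n : ℕ, f r = f a ^ n := by
  obtain ⟨p, hp, -, hcoeff, hpa⟩ :=
    LinearMap.exists_monic_and_natDegree_eq_and_coeff_mem_pow_and_aeval_eq_zero R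
      (algebraMap R (Module.End R M) a) (RingHom.ker f) (by rintro _ ⟨m, rfl⟩; exact ha m)
  refine ⟨p.eval a, ?_, p.natDegree, ?_⟩
  · rw [aeval_algebraMap_apply_eq_algebraMap_eval] at hpa
    exact Module.mem_annihilator.mpr fun m => congr($hpa m)
  · have hmap := hp.map_eq_X_pow_of_coeff_mem_ker fun k hk =>
      Ideal.pow_le_self (Nat.sub_ne_zero_of_lt hk) (hcoeff k)
    rw [← eval₂_hom, ← eval_map, hmap, eval_X_pow]

theorem Module.isTorsion_of_isTorsion_quotient_ker_smul_top {R S M : Type*}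
    [CommRing R] [NoZeroDivisors R] [CommRing S] [Nontrivial S] [Algebra R S]
    (hsurj : Function.Surjective (algebraMap R S))
    [AddCommGroup M] [Module R M] [Module.Finite R M]
    [Module S (M ⧸ RingHom.ker (algebraMap R S) • (⊤ : Submodule R M))]
    [IsScalarTower R S (M ⧸ RingHom.ker (algebraMap R S) • (⊤ : Submodule R M))]
    (htors : Module.IsTorsion S (M ⧸ RingHom.ker (algebraMap R S) • (⊤ : Submodule R M))) :
    Module.IsTorsion R M := by
  have : Module.Finite S (M ⧸ RingHom.ker (algebraMap R S) • (⊤ : Submodule R M)) :=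
    .of_restrictScalars_finite R S _
  obtain ⟨s, hsQ, hs⟩ := Submodule.annihilator_top_inter_nonZeroDivisors htors
  obtain ⟨a, rfl⟩ := hsurj s
  have ha : ∀ m : M, a • m ∈ RingHom.ker (algebraMap R S) • (⊤ : Submodule R M) := fun m => by
    rw [← Submodule.Quotient.mk_eq_zero, Submodule.Quotient.mk_smul, ← algebraMap_smul S a]
    exact Submodule.mem_annihilator.mp hsQ _ Submodule.mem_top
  obtain ⟨r, hr, n, hrn⟩ := Module.exists_mem_annihilator_map_eq_pow_of_smul_mem_ker_smul_top _ ha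
  have hr0 : r ≠ 0 := by
    rintro rfl
    exact nonZeroDivisors.ne_zero (pow_mem hs n) (by simpa using hrn.symm)
  exact fun m => ⟨⟨r, mem_nonZeroDivisors_of_ne_zero hr0⟩, Module.mem_annihilator.mp hr m⟩

theorem stmt13_general (ℓ : ℕ) [Fact ℓ.Prime] (d : ℕ)
    (π : MvPowerSeries (Fin d) ℤ_[ℓ] →+* PowerSeries ℤ_[ℓ]) (hπ : Function.Surjective π)
    (M : Type) [AddCommGroup M] [Module (MvPowerSeries (Fin d) ℤ_[ℓ]) M]
    [Module.Finite (MvPowerSeries (Fin d) ℤ_[ℓ]) M]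
    [Module (PowerSeries ℤ_[ℓ])
      (M ⧸ (RingHom.ker π • (⊤ : Submodule (MvPowerSeries (Fin d) ℤ_[ℓ]) M)))]
    (hcompat : ∀ (a : MvPowerSeries (Fin d) ℤ_[ℓ])
      (x : M ⧸ (RingHom.ker π • (⊤ : Submodule (MvPowerSeries (Fin d) ℤ_[ℓ]) M))),
      π a • x = a • x)
    (htors : Module.IsTorsion (PowerSeries ℤ_[ℓ])
      (M ⧸ (RingHom.ker π • (⊤ : Submodule (MvPowerSeries (Fin d) ℤ_[ℓ]) M)))) :
    Module.IsTorsion (MvPowerSeries (Fin d) ℤ_[ℓ]) M := by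
  let := π.toAlgebra
  have := IsScalarTower.of_algebraMap_smul hcompat
  exact Module.isTorsion_of_isTorsion_quotient_ker_smul_top hπ htors

/-- Let `𝔄` be the kernel of a surjection `π : Λ_d → Λ` and `M` a
finitely generated `Λ_d`-module. If `M/𝔄M` is a torsion `Λ`-module (for the induced
`Λ`-action), then `M` is a torsion `Λ_d`-module. -/
theorem stmt13 (ℓ : ℕ) [Fact ℓ.Prime] (d : ℕ) (hd : 2 ≤ d)
    (π : MvPowerSeries (Fin d) ℤ_[ℓ] →+* PowerSeries ℤ_[ℓ]) (hπ : Function.Surjective π)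
    (M : Type) [AddCommGroup M] [Module (MvPowerSeries (Fin d) ℤ_[ℓ]) M]
    [Module.Finite (MvPowerSeries (Fin d) ℤ_[ℓ]) M]
    [Module (PowerSeries ℤ_[ℓ])
      (M ⧸ (RingHom.ker π • (⊤ : Submodule (MvPowerSeries (Fin d) ℤ_[ℓ]) M)))]
    (hcompat : ∀ (a : MvPowerSeries (Fin d) ℤ_[ℓ])
      (x : M ⧸ (RingHom.ker π • (⊤ : Submodule (MvPowerSeries (Fin d) ℤ_[ℓ]) M))),
      π a • x = a • x)
    (htors : Module.IsTorsion (PowerSeries ℤ_[ℓ])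
      (M ⧸ (RingHom.ker π • (⊤ : Submodule (MvPowerSeries (Fin d) ℤ_[ℓ]) M)))) :
    Module.IsTorsion (MvPowerSeries (Fin d) ℤ_[ℓ]) M :=
  stmt13_general ℓ d π hπ M hcompat htors
end
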